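/- arXiv:1606.04688 — 4 statements merged into one kernel-verified Lean document; each statement's English description precedes it below -/
import Mathlib

section
/- The set of all vectors of the form a + f with a ∈ L and ⟨a+f | a+f⟩ = 2/7 is exactly the set {β_0, β_1, β_2, β_3, β_4, β_5, β_6}, and these seven vectors are pairwise distinct. -/
noncomputable section

/-- The bilinear form `⟨x|y⟩ = (1/8) ∑ i, x i * y i` on `ℚ^24`. -/
def B (x y : Fin 24 → ℚ) : ℚ := (1/8) * ∑ i, x i * y i

def v1 : Fin 24 → ℚ :=
  (1/7 : ℚ) • ![0,4,4,4,4,4,4,4, 0,4,4,4,4,4,4,4, 0,0,0,0,0,0,0,0]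
def v2 : Fin 24 → ℚ :=
  (1/7 : ℚ) • ![0,0,0,0,0,0,0,0, 0,4,4,4,4,4,4,4, 0,4,4,4,4,4,4,4]
def v3 : Fin 24 → ℚ :=
  (1/7 : ℚ) • ![0,4,4,4,4,4,4,4, 0,-4,-4,-4,-4,-4,-4,-4, 0,0,0,0,0,0,0,0]
def v4 : Fin 24 → ℚ :=
  (1/7 : ℚ) • ![-14,2,2,2,2,2,2,2, 0,0,0,0,0,0,0,0, 0,0,0,0,0,0,0,0]
def v5 : Fin 24 → ℚ :=
  (1/7 : ℚ) • ![0,0,0,0,0,0,0,0, -14,2,2,2,2,2,2,2, 0,0,0,0,0,0,0,0]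
def v6 : Fin 24 → ℚ :=
  (1/7 : ℚ) • ![-7,1,1,1,1,1,1,1, -7,1,1,1,1,1,1,1, -7,-3,-3,-3,-3,-3,-3,-3]

/-- `L` is the ℤ-span of `v1, …, v6` in `ℚ^24`. -/
def L : Submodule ℤ (Fin 24 → ℚ) :=
  Submodule.span ℤ {v1, v2, v3, v4, v5, v6}

def f : Fin 24 → ℚ :=
  (1/7 : ℚ) • ![5,1,1,1,1,1,1,1, 1,1,1,1,1,1,1,1, 3,3,3,3,3,3,3,3]

def β0 : Fin 24 → ℚ :=
  (1/7 : ℚ) • ![-9,-1,-1,-1,-1,-1,-1,-1, 1,1,1,1,1,1,1,1, 3,-1,-1,-1,-1,-1,-1,-1]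
def β2 : Fin 24 → ℚ :=
  (1/7 : ℚ) • ![-2,-2,-2,-2,-2,-2,-2,-2, -6,-2,-2,-2,-2,-2,-2,-2, -4,0,0,0,0,0,0,0]
def β3 : Fin 24 → ℚ :=
  (1/7 : ℚ) • ![-2,2,2,2,2,2,2,2, 8,0,0,0,0,0,0,0, -4,0,0,0,0,0,0,0]
def β4 : Fin 24 → ℚ :=
  (1/7 : ℚ) • ![5,-3,-3,-3,-3,-3,-3,-3, 1,1,1,1,1,1,1,1, 3,-1,-1,-1,-1,-1,-1,-1]
def β5 : Fin 24 → ℚ :=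
  (1/7 : ℚ) • ![-2,2,2,2,2,2,2,2, -6,2,2,2,2,2,2,2, -4,0,0,0,0,0,0,0]
def β6 : Fin 24 → ℚ :=
  (1/7 : ℚ) • ![5,1,1,1,1,1,1,1, 1,-3,-3,-3,-3,-3,-3,-3, 3,-1,-1,-1,-1,-1,-1,-1]

/-- `β i` for `i = 0, …, 6`, with `β 1 = f`. -/
def β : Fin 7 → (Fin 24 → ℚ) := ![β0, f, β2, β3, β4, β5, β6]

def combo (c1 c2 c3 c4 c5 c6 : ℤ) : Fin 24 → ℚ :=
  c1 • v1 + c2 • v2 + c3 • v3 + c4 • v4 + c5 • v5 + c6 • v6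

lemma mem_L_iff (a : Fin 24 → ℚ) :
    a ∈ L ↔ ∃ c1 c2 c3 c4 c5 c6 : ℤ, a = combo c1 c2 c3 c4 c5 c6 := by
  constructor
  · intro ha
    simp only [L, Submodule.mem_span_insert, Submodule.mem_span_singleton] at ha
    obtain ⟨c1, z1, ⟨c2, z2, ⟨c3, z3, ⟨c4, z4, ⟨c5, z5, ⟨c6, hz5⟩, hz4⟩, hz3⟩, hz2⟩, hz1⟩, ha⟩ := ha
    exact ⟨c1, c2, c3, c4, c5, c6, by subst ha hz1 hz2 hz3 hz4 hz5; simp [combo, add_assoc]⟩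
  · rintro ⟨c1, c2, c3, c4, c5, c6, rfl⟩
    have h : ∀ w ∈ ({v1, v2, v3, v4, v5, v6} : Set (Fin 24 → ℚ)), w ∈ L :=
      fun w hw => Submodule.subset_span hw
    refine Submodule.add_mem _ (Submodule.add_mem _ (Submodule.add_mem _ (Submodule.add_mem _
      (Submodule.add_mem _ ?_ ?_) ?_) ?_) ?_) ?_ <;>
      exact Submodule.smul_mem _ _ (h _ (by simp))

set_option maxHeartbeats 1000000 in
lemma Bval (c1 c2 c3 c4 c5 c6 : ℤ) :
    B (combo c1 c2 c3 c4 c5 c6 + f) (combo c1 c2 c3 c4 c5 c6 + f)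
      = (1/7) * ((4*c1^2+4*c2^2+4*c3^2+4*c4^2+4*c5^2+4*c6^2
        + 4*c1*c2 + 2*c1*c4 + 2*c1*c5 + 2*c1*c6
        - 4*c2*c3 + 2*c2*c5 - 2*c2*c6
        + 2*c3*c4 - 2*c3*c5
        + 4*c4*c6 + 4*c5*c6
        + 2*c1 + 4*c2 - 2*c4 - 4*c6 : ℤ) + 2 : ℚ) := by
  simp only [combo, v1, v2, v3, v4, v5, v6, f, Matrix.smul_cons, Matrix.cons_add_cons,
    Matrix.smul_empty, Matrix.empty_add_empty, zsmul_eq_mul, smul_eq_mul]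
  simp only [B, Fin.sum_univ_succ, Fin.sum_univ_zero, Matrix.cons_val_zero, Matrix.cons_val_succ]
  push_cast
  ring

set_option maxHeartbeats 4000000 in
lemma key (c1 c2 c3 c4 c5 c6 : ℤ)
    (hQ : 4*c1^2+4*c2^2+4*c3^2+4*c4^2+4*c5^2+4*c6^2
        + 4*c1*c2 + 2*c1*c4 + 2*c1*c5 + 2*c1*c6
        - 4*c2*c3 + 2*c2*c5 - 2*c2*c6
        + 2*c3*c4 - 2*c3*c5
        + 4*c4*c6 + 4*c5*c6
        + 2*c1 + 4*c2 - 2*c4 - 4*c6 = 0) :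
    (c1 = 0 ∧ c2 = -1 ∧ c3 = -1 ∧ c4 = 1 ∧ c5 = 0 ∧ c6 = 0) ∨
    (c1 = 0 ∧ c2 = 0 ∧ c3 = 0 ∧ c4 = 0 ∧ c5 = 0 ∧ c6 = 0) ∨
    (c1 = -1 ∧ c2 = 0 ∧ c3 = 0 ∧ c4 = 0 ∧ c5 = 0 ∧ c6 = 1) ∨
    (c1 = 0 ∧ c2 = 0 ∧ c3 = 0 ∧ c4 = 0 ∧ c5 = -1 ∧ c6 = 1) ∨
    (c1 = 0 ∧ c2 = -1 ∧ c3 = -1 ∧ c4 = 0 ∧ c5 = 0 ∧ c6 = 0) ∨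
    (c1 = 0 ∧ c2 = 0 ∧ c3 = 0 ∧ c4 = 0 ∧ c5 = 0 ∧ c6 = 1) ∨
    (c1 = 0 ∧ c2 = -1 ∧ c3 = 0 ∧ c4 = 0 ∧ c5 = 0 ∧ c6 = 0) := by
  have h1 : (7*c1+1)^2 ≤ 56 := by
    nlinarith [sq_nonneg (4*c2-2*c3+c5-c6+2*c1+2), sq_nonneg (6*c3+2*c4-c5-c6+2*c1+2),
      sq_nonneg (22*c4+c5+13*c6+4*c1-8), sq_nonneg (161*c5+91*c6+28*c1-12),
      sq_nonneg (28*c6+21*c1-9)]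
  have h2 : (7*c2+3)^2 ≤ 112 := by
    nlinarith [sq_nonneg (4*c1+c4+c5+c6+2*c2+1), sq_nonneg (4*c3+c4-c5-2*c2),
      sq_nonneg (14*c4+7*c6-5), sq_nonneg (14*c5+7*c6-1), sq_nonneg (4*c6-3*c2-3)]
  have h3 : (7*c3+2)^2 ≤ 56 := by
    nlinarith [sq_nonneg (4*c1+2*c2+c4+c5+c6+1), sq_nonneg (6*c2-c4+c5-3*c6-4*c3+3),
      sq_nonneg (22*c4-c5+9*c6+4*c3-6), sq_nonneg (161*c5+91*c6-28*c3-24),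
      sq_nonneg (28*c6-21*c3-18)]
  have h4 : (7*c4-1)^2 ≤ 56 := by
    nlinarith [sq_nonneg (4*c1+2*c2+c5+c6+c4+1), sq_nonneg (6*c2-4*c3+c5-3*c6-c4+3),
      sq_nonneg (8*c3-2*c5-3*c6+2*c4+3), sq_nonneg (14*c5+7*c6-1), sq_nonneg (7*c6+7*c4-4)]
  have h5 : (7*c5+1)^2 ≤ 56 := by
    nlinarith [sq_nonneg (4*c1+2*c2+c4+c6+c5+1), sq_nonneg (6*c2-4*c3-c4-3*c6+c5+3),
      sq_nonneg (8*c3+2*c4-3*c6-2*c5+3), sq_nonneg (14*c4+7*c6-5), sq_nonneg (7*c6+7*c5-2)]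
  have h6 : (7*c6-3)^2 ≤ 112 := by
    nlinarith [sq_nonneg (4*c1+2*c2+c4+c5+c6+1), sq_nonneg (6*c2-4*c3-c4+c5-3*c6+3),
      sq_nonneg (8*c3+2*c4-2*c5-3*c6+3), sq_nonneg (14*c4+7*c6-5), sq_nonneg (14*c5+7*c6-1)]
  have b1l : -1 ≤ c1 := by nlinarith [h1]
  have b1r : c1 ≤ 0 := by nlinarith [h1]
  have b2l : -1 ≤ c2 := by nlinarith [h2]
  have b2r : c2 ≤ 1 := by nlinarith [h2]
  have b3l : -1 ≤ c3 := by nlinarith [h3]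
  have b3r : c3 ≤ 0 := by nlinarith [h3]
  have b4l : 0 ≤ c4 := by nlinarith [h4]
  have b4r : c4 ≤ 1 := by nlinarith [h4]
  have b5l : -1 ≤ c5 := by nlinarith [h5]
  have b5r : c5 ≤ 0 := by nlinarith [h5]
  have b6l : -1 ≤ c6 := by nlinarith [h6]
  have b6r : c6 ≤ 1 := by nlinarith [h6]
  interval_cases c1 <;> interval_cases c2 <;> interval_cases c3 <;>
    interval_cases c4 <;> interval_cases c5 <;> interval_cases c6 <;> omega

lemma e0 : combo 0 (-1) (-1) 1 0 0 + f = β0 := by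
  norm_num [combo, v1, v2, v3, v4, v5, v6, f, β0, Matrix.smul_cons, Matrix.cons_add_cons,
    Matrix.smul_empty, Matrix.empty_add_empty]
lemma e1 : combo 0 0 0 0 0 0 + f = f := by
  norm_num [combo, v1, v2, v3, v4, v5, v6, f, Matrix.smul_cons, Matrix.cons_add_cons,
    Matrix.smul_empty, Matrix.empty_add_empty]
lemma e2 : combo (-1) 0 0 0 0 1 + f = β2 := by
  norm_num [combo, v1, v2, v3, v4, v5, v6, f, β2, Matrix.smul_cons, Matrix.cons_add_cons,
    Matrix.smul_empty, Matrix.empty_add_empty]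
lemma e3 : combo 0 0 0 0 (-1) 1 + f = β3 := by
  norm_num [combo, v1, v2, v3, v4, v5, v6, f, β3, Matrix.smul_cons, Matrix.cons_add_cons,
    Matrix.smul_empty, Matrix.empty_add_empty]
lemma e4 : combo 0 (-1) (-1) 0 0 0 + f = β4 := by
  norm_num [combo, v1, v2, v3, v4, v5, v6, f, β4, Matrix.smul_cons, Matrix.cons_add_cons,
    Matrix.smul_empty, Matrix.empty_add_empty]
lemma e5 : combo 0 0 0 0 0 1 + f = β5 := by
  norm_num [combo, v1, v2, v3, v4, v5, v6, f, β5, Matrix.smul_cons, Matrix.cons_add_cons,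
    Matrix.smul_empty, Matrix.empty_add_empty]
lemma e6 : combo 0 (-1) 0 0 0 0 + f = β6 := by
  norm_num [combo, v1, v2, v3, v4, v5, v6, f, β6, Matrix.smul_cons, Matrix.cons_add_cons,
    Matrix.smul_empty, Matrix.empty_add_empty]

lemma comboB (c1 c2 c3 c4 c5 c6 : ℤ) (x : Fin 24 → ℚ)
    (h : combo c1 c2 c3 c4 c5 c6 + f = x)
    (hv : (1/7 : ℚ) * ((4*c1^2+4*c2^2+4*c3^2+4*c4^2+4*c5^2+4*c6^2
        + 4*c1*c2 + 2*c1*c4 + 2*c1*c5 + 2*c1*c6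
        - 4*c2*c3 + 2*c2*c5 - 2*c2*c6
        + 2*c3*c4 - 2*c3*c5
        + 4*c4*c6 + 4*c5*c6
        + 2*c1 + 4*c2 - 2*c4 - 4*c6 : ℤ) + 2 : ℚ) = 2/7) :
    x ∈ {x : Fin 24 → ℚ | ∃ a ∈ L, x = a + f ∧ B x x = 2/7} :=
  ⟨combo c1 c2 c3 c4 c5 c6, (mem_L_iff _).2 ⟨c1, c2, c3, c4, c5, c6, rfl⟩, h.symm,
    h ▸ (Bval c1 c2 c3 c4 c5 c6).trans hv⟩
set_option maxHeartbeats 1000000 in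
lemma dist : ∀ i j : Fin 7, i ≠ j → β i ≠ β j := by
  intro i j hij h
  have h0 := congrFun h 0
  have h1 := congrFun h 1
  have h8 := congrFun h
    (Fin.succ (Fin.succ (Fin.succ (Fin.succ (Fin.succ (Fin.succ (Fin.succ (Fin.succ (0 : Fin 16)))))))))
  have h9 := congrFun h
    (Fin.succ (Fin.succ (Fin.succ (Fin.succ (Fin.succ (Fin.succ (Fin.succ (Fin.succ (Fin.succ (0 : Fin 15))))))))))
  fin_cases i <;> fin_cases j <;>
    first
      | exact absurd rfl hij
      | (norm_num [β, β0, β2, β3, β4, β5, β6, f, Matrix.cons_val_succ] at h0; done)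
      | (norm_num [β, β0, β2, β3, β4, β5, β6, f, Matrix.cons_val_succ] at h1; done)
      | (norm_num [β, β0, β2, β3, β4, β5, β6, f, Matrix.cons_val_succ] at h8; done)
      | (norm_num [β, β0, β2, β3, β4, β5, β6, f, Matrix.cons_val_succ, Matrix.cons_val_two, Matrix.tail_cons, Matrix.head_cons] at h9; done)
lemma βe0 : β 0 = β0 := rfl
lemma βe1 : β 1 = f := rfl
lemma βe2 : β 2 = β2 := rfl
lemma βe3 : β 3 = β3 := rfl
lemma βe4 : β 4 = β4 := rfl
lemma βe5 : β 5 = β5 := rfl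
lemma βe6 : β 6 = β6 := rfl

/-- the set of all `a + f` with `a ∈ L` and `⟨a+f|a+f⟩ = 2/7` is exactly
`{β 0, …, β 6}`, and these seven vectors are pairwise distinct. -/
theorem stmt0 :
    ({x : Fin 24 → ℚ | ∃ a ∈ L, x = a + f ∧ B x x = 2/7} =
      {β 0, β 1, β 2, β 3, β 4, β 5, β 6}) ∧
    (∀ i j : Fin 7, i ≠ j → β i ≠ β j) := by
  constructor
  · ext x
    simp only [Set.mem_setOf_eq, Set.mem_insert_iff, Set.mem_singleton_iff]
    constructor
    · rintro ⟨a, ha, rfl, hB⟩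
      obtain ⟨c1, c2, c3, c4, c5, c6, rfl⟩ := (mem_L_iff a).1 ha
      rw [Bval] at hB
      have h' : ((4*c1^2+4*c2^2+4*c3^2+4*c4^2+4*c5^2+4*c6^2
        + 4*c1*c2 + 2*c1*c4 + 2*c1*c5 + 2*c1*c6
        - 4*c2*c3 + 2*c2*c5 - 2*c2*c6
        + 2*c3*c4 - 2*c3*c5
        + 4*c4*c6 + 4*c5*c6
        + 2*c1 + 4*c2 - 2*c4 - 4*c6 : ℤ) : ℚ) = 0 := by linarith
      have hQ : (4*c1^2+4*c2^2+4*c3^2+4*c4^2+4*c5^2+4*c6^2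
        + 4*c1*c2 + 2*c1*c4 + 2*c1*c5 + 2*c1*c6
        - 4*c2*c3 + 2*c2*c5 - 2*c2*c6
        + 2*c3*c4 - 2*c3*c5
        + 4*c4*c6 + 4*c5*c6
        + 2*c1 + 4*c2 - 2*c4 - 4*c6 : ℤ) = 0 := by exact_mod_cast h'
      rcases key c1 c2 c3 c4 c5 c6 hQ with
        ⟨rfl,rfl,rfl,rfl,rfl,rfl⟩|⟨rfl,rfl,rfl,rfl,rfl,rfl⟩|⟨rfl,rfl,rfl,rfl,rfl,rfl⟩|
        ⟨rfl,rfl,rfl,rfl,rfl,rfl⟩|⟨rfl,rfl,rfl,rfl,rfl,rfl⟩|⟨rfl,rfl,rfl,rfl,rfl,rfl⟩|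
        ⟨rfl,rfl,rfl,rfl,rfl,rfl⟩
      · exact Or.inl (βe0 ▸ e0)
      · exact Or.inr (Or.inl (βe1 ▸ e1))
      · exact Or.inr (Or.inr (Or.inl (βe2 ▸ e2)))
      · exact Or.inr (Or.inr (Or.inr (Or.inl (βe3 ▸ e3))))
      · exact Or.inr (Or.inr (Or.inr (Or.inr (Or.inl (βe4 ▸ e4)))))
      · exact Or.inr (Or.inr (Or.inr (Or.inr (Or.inr (Or.inl (βe5 ▸ e5))))))
      · exact Or.inr (Or.inr (Or.inr (Or.inr (Or.inr (Or.inr (βe6 ▸ e6))))))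
    · rintro (rfl|rfl|rfl|rfl|rfl|rfl|rfl)
      · exact comboB 0 (-1) (-1) 1 0 0 _ (βe0 ▸ e0) (by norm_num)
      · exact comboB 0 0 0 0 0 0 _ (βe1 ▸ e1) (by norm_num)
      · exact comboB (-1) 0 0 0 0 1 _ (βe2 ▸ e2) (by norm_num)
      · exact comboB 0 0 0 0 (-1) 1 _ (βe3 ▸ e3) (by norm_num)
      · exact comboB 0 (-1) (-1) 0 0 0 _ (βe4 ▸ e4) (by norm_num)
      · exact comboB 0 0 0 0 0 1 _ (βe5 ▸ e5) (by norm_num)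
      · exact comboB 0 (-1) 0 0 0 0 _ (βe6 ▸ e6) (by norm_num)
  · exact dist
end
end

section
/- For every x ∈ L and every r ∈ {1, 2, 3, -1, -2, -3}, one has ⟨x + r·f | x + r·f⟩ ≥ 2/7. -/
noncomputable section

/-!
The Gram matrix of `v1, …, v6, f` has entries in `(1/7)ℤ` and diagonal entries in `(2/7)ℤ`, so
`⟨y|y⟩ ∈ (2/7)ℤ` for every `y` in the lattice `L + ℤ f`. Every vector of `L` has an integral
0-th coordinate while `f 0 = 5/7`, so `x + r f ≠ 0` when `7 ∤ r`; by positive definiteness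
`⟨x + r f|x + r f⟩` is then a positive element of `(2/7)ℤ`.
-/

theorem Rat.mem_zmultiples_iff_den_div_eq_one {a q : ℚ} (ha : a ≠ 0) :
    q ∈ AddSubgroup.zmultiples a ↔ (q / a).den = 1 := by
  rw [AddSubgroup.mem_zmultiples_iff]
  constructor
  · rintro ⟨k, rfl⟩
    rw [zsmul_eq_mul, mul_div_cancel_right₀ _ ha, Rat.den_intCast]
  · intro h
    refine ⟨(q / a).num, ?_⟩
    rw [zsmul_eq_mul, Rat.coe_int_num_of_den_eq_one h, div_mul_cancel₀ _ ha]

theorem le_of_mem_zmultiples_of_pos {K : Type*} [Field K] [LinearOrder K] [IsStrictOrderedRing K]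
    {a q : K} (ha : 0 < a) (hq : q ∈ AddSubgroup.zmultiples a) (hq0 : 0 < q) : a ≤ q := by
  obtain ⟨k, rfl⟩ := AddSubgroup.mem_zmultiples_iff.1 hq
  rw [zsmul_eq_mul] at hq0 ⊢
  have hk : (1 : K) ≤ k := by exact_mod_cast (pos_of_mul_pos_left hq0 ha.le : (0 : K) < k)
  nlinarith

theorem LinearMap.apply_self_mem_of_mem_span {R E N : Type*} [CommSemiring R] [AddCommGroup E]
    [Module R E] [AddCommGroup N] [Module R N] (Φ : E →ₗ[R] E →ₗ[R] N) {G : AddSubgroup N}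
    {s : Set E} (hdiag : ∀ x ∈ s, Φ x x ∈ G) (hpolar : ∀ x ∈ s, ∀ y ∈ s, Φ x y + Φ y x ∈ G)
    {y : E} (hy : y ∈ Submodule.span ℤ s) : Φ y y ∈ G := by
  have hpolar_span : ∀ y ∈ Submodule.span ℤ s, ∀ z ∈ Submodule.span ℤ s, Φ y z + Φ z y ∈ G := by
    intro y hy z hz
    induction hy, hz using Submodule.span_induction₂ with
    | mem_mem x y hx hy => exact hpolar x hx y hy
    | zero_left => simp
    | zero_right => simp
    | add_left x y z _ _ _ hxz hyz =>
      convert add_mem hxz hyz using 1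
      simp only [map_add, LinearMap.add_apply]; abel
    | add_right x y z _ _ _ hxy hxz =>
      convert add_mem hxy hxz using 1
      simp only [map_add, LinearMap.add_apply]; abel
    | smul_left n x y _ _ hxy =>
      convert zsmul_mem hxy n using 1
      simp only [map_zsmul, LinearMap.smul_apply, smul_add]
    | smul_right n x y _ _ hxy =>
      convert zsmul_mem hxy n using 1
      simp only [map_zsmul, LinearMap.smul_apply, smul_add]
  induction hy using Submodule.span_induction with
  | mem x hx => exact hdiag x hx
  | zero => simp
  | add x z hx hz hxx hzz =>
    convert add_mem (add_mem hxx hzz) (hpolar_span x hx z hz) using 1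
    simp only [map_add, LinearMap.add_apply]; abel
  | smul n x _ hxx =>
    convert zsmul_mem hxx (n * n) using 1
    simp only [map_zsmul, LinearMap.smul_apply, mul_smul]

def B.toBilinForm : LinearMap.BilinForm ℚ (Fin 24 → ℚ) := (1 / 8 : ℚ) • dotProductBilin ℚ ℚ

theorem B.toBilinForm_apply (x y : Fin 24 → ℚ) : B.toBilinForm x y = B x y := rfl

theorem B_self_pos {y : Fin 24 → ℚ} (hy : y ≠ 0) : 0 < B y y := by
  have h : 0 < y ⬝ᵥ y :=
    lt_of_le_of_ne (Finset.sum_nonneg fun i _ => mul_self_nonneg (y i))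
      (Ne.symm (dotProduct_self_eq_zero.not.2 hy))
  unfold B; unfold dotProduct at h; positivity

def gens : Fin 7 → Fin 24 → ℚ := ![v1, v2, v3, v4, v5, v6, f]

theorem L_le_span_gens : L ≤ Submodule.span ℤ (Set.range gens) :=
  Submodule.span_mono (by simp [gens, Matrix.range_cons, Set.insert_subset_iff])

theorem f_mem_span_gens : f ∈ Submodule.span ℤ (Set.range gens) :=
  Submodule.subset_span ⟨6, rfl⟩

theorem B_gens_self_den : ∀ i : Fin 7, (B (gens i) (gens i) / (2 / 7)).den = 1 := by
  decide +kernel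

theorem B_gens_polar_den :
    ∀ i j : Fin 7, ((B (gens i) (gens j) + B (gens j) (gens i)) / (2 / 7)).den = 1 := by
  decide +kernel

theorem B_self_mem_zmultiples {y : Fin 24 → ℚ} (hy : y ∈ Submodule.span ℤ (Set.range gens)) :
    B y y ∈ AddSubgroup.zmultiples (2 / 7 : ℚ) := by
  simp only [← B.toBilinForm_apply]
  refine B.toBilinForm.apply_self_mem_of_mem_span ?_ ?_ hy
  · rintro _ ⟨i, rfl⟩
    exact (Rat.mem_zmultiples_iff_den_div_eq_one (by norm_num)).2 (B_gens_self_den i)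
  · rintro _ ⟨i, rfl⟩ _ ⟨j, rfl⟩
    exact (Rat.mem_zmultiples_iff_den_div_eq_one (by norm_num)).2 (B_gens_polar_den i j)

theorem L_le_comap_proj_zero : L ≤ (1 : Submodule ℤ ℚ).comap (LinearMap.proj 0) := by
  refine Submodule.span_le.2 ?_
  rintro _ (rfl | rfl | rfl | rfl | rfl | rfl)
  all_goals norm_num [Submodule.mem_one, v1, v2, v3, v4, v5, v6]
  exact ⟨2, by norm_num⟩

theorem apply_zero_add_smul_f_ne_zero {x : Fin 24 → ℚ} (hx : x ∈ L) {k : ℤ} (hk : ¬ 7 ∣ k) :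
    (x + (k : ℚ) • f) 0 ≠ 0 := by
  obtain ⟨n, hn⟩ : ∃ n : ℤ, (n : ℚ) = x 0 := by
    simpa using Submodule.mem_one.1 (L_le_comap_proj_zero hx)
  have hf : f 0 = 5 / 7 := by norm_num [f]
  rw [Pi.add_apply, Pi.smul_apply, smul_eq_mul, hf, ← hn]
  intro h
  have : 7 * n + 5 * k = 0 := by qify; linarith
  omega

theorem two_sevenths_le_B_self {x : Fin 24 → ℚ} (hx : x ∈ L) {k : ℤ} (hk : ¬ 7 ∣ k) :
    2 / 7 ≤ B (x + (k : ℚ) • f) (x + (k : ℚ) • f) := by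
  have hmem : x + (k : ℚ) • f ∈ Submodule.span ℤ (Set.range gens) := by
    rw [Int.cast_smul_eq_zsmul]
    exact add_mem (L_le_span_gens hx) (Submodule.smul_mem _ k f_mem_span_gens)
  have hne : x + (k : ℚ) • f ≠ 0 := fun h => apply_zero_add_smul_f_ne_zero hx hk (by rw [h]; rfl)
  exact le_of_mem_zmultiples_of_pos (by norm_num) (B_self_mem_zmultiples hmem) (B_self_pos hne)

/-- for every `x ∈ L` and `r ∈ {1,2,3,-1,-2,-3}`, `⟨x+rf|x+rf⟩ ≥ 2/7`. -/
theorem stmt5 :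
    ∀ x ∈ L, ∀ r : ℚ, r ∈ ({1, 2, 3, -1, -2, -3} : Set ℚ) →
      2/7 ≤ B (x + r • f) (x + r • f) := by
  intro x hx r hr
  obtain ⟨k, rfl, hk⟩ : ∃ k : ℤ, r = k ∧ ¬ 7 ∣ k := by
    rcases hr with rfl | rfl | rfl | rfl | rfl | rfl
    exacts [⟨1, by norm_num, by decide⟩, ⟨2, by norm_num, by decide⟩, ⟨3, by norm_num, by decide⟩,
      ⟨-1, by norm_num, by decide⟩, ⟨-2, by norm_num, by decide⟩, ⟨-3, by norm_num, by decide⟩]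
  exact two_sevenths_le_B_self hx hk
end
end

section
/- The vectors β_1, β_2, β_3, β_4, β_5, β_6 are linearly independent over ℚ, and the 6×6 matrix with (i,j)-entry 2⟨β_i|β_j⟩/⟨β_j|β_j⟩ (1 ≤ i, j ≤ 6) equals the Cartan matrix of type A_6, i.e., the matrix with 2 on the diagonal, -1 in entries (i,j) with |i-j| = 1, and 0 elsewhere; hence, up to a common scaling, {β_1, …, β_6} is a set of simple roots for a root system of type A_6. -/
noncomputable section

/-! The Gram matrix of `β 1, …, β 6` is `1/7` times the Cartan matrix `A₆`, whose determinant
is `7`. A family with an invertible Gram matrix is linearly independent, and since every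
`⟨β i|β i⟩ = 2/7`, the normalized inner products are exactly the entries of `A₆`. -/

open Matrix

theorem LinearMap.linearIndependent_of_isUnit_pairing {K V W ι : Type*} [Field K]
    [AddCommGroup V] [Module K V] [AddCommGroup W] [Module K W] [Fintype ι] [DecidableEq ι]
    (b : V →ₗ[K] W →ₗ[K] K) (v : ι → V) (w : ι → W)
    (h : IsUnit (of fun i j => b (v i) (w j))) : LinearIndependent K v := by
  rw [Fintype.linearIndependent_iff]
  intro c hc
  set G := of fun i j => b (v i) (w j)
  have hvecMul : vecMul c G = vecMul 0 G := by
    ext j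
    simpa [G, vecMul, dotProduct] using congrArg (fun x => b x (w j)) hc
  exact congrFun (vecMul_injective_iff_isUnit.mpr h hvecMul)

theorem CartanMatrix.det_A_six : (CartanMatrix.A 6).det = 7 := by
  simp [det_succ_row_zero, Fin.sum_univ_succ, CartanMatrix.A, Fin.succAbove]

theorem CartanMatrix.A_apply_eq_ite_int {n : ℕ} (i j : Fin n) :
    CartanMatrix.A n i j =
      if i = j then 2
      else if (i : ℤ) - (j : ℤ) = 1 ∨ (j : ℤ) - (i : ℤ) = 1 then -1
      else 0 := by
  simp only [CartanMatrix.A, of_apply]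
  split_ifs <;> omega

theorem B_eq_dotProduct (x y : Fin 24 → ℚ) : B x y = 8⁻¹ * (x ⬝ᵥ y) := by
  simp [B, dotProduct]

theorem gram_β_eq_smul_cartanA :
    of (fun i j : Fin 6 => B (β i.succ) (β j.succ)) =
      (7⁻¹ : ℚ) • (CartanMatrix.A 6).map (↑) := by
  ext i j
  fin_cases i <;> fin_cases j <;>
    norm_num [B_eq_dotProduct, β, f, β2, β3, β4, β5, β6, CartanMatrix.A]

theorem isUnit_gram_β : IsUnit (of fun i j : Fin 6 => B (β i.succ) (β j.succ)) := by
  rw [gram_β_eq_smul_cartanA, isUnit_iff_isUnit_det, det_smul, ← Int.cast_det,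
    CartanMatrix.det_A_six]
  norm_num

theorem linearIndependent_β : LinearIndependent ℚ (fun i : Fin 6 => β i.succ) :=
  LinearMap.linearIndependent_of_isUnit_pairing ((8⁻¹ : ℚ) • dotProductBilin ℚ ℚ) _ _
    (by simpa [B_eq_dotProduct] using isUnit_gram_β)

/-- `β 1, …, β 6` are linearly independent over ℚ, and the 6×6 matrix of
normalized inner products `2⟨β i|β j⟩/⟨β j|β j⟩` is the Cartan matrix of type `A₆`. -/
theorem stmt8 :
    LinearIndependent ℚ (fun i : Fin 6 => β i.succ) ∧
    (∀ i j : Fin 6,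
      2 * B (β i.succ) (β j.succ) / B (β j.succ) (β j.succ) =
        if i = j then 2
        else if (i : ℤ) - (j : ℤ) = 1 ∨ (j : ℤ) - (i : ℤ) = 1 then -1
        else 0) := by
  refine ⟨linearIndependent_β, fun i j => ?_⟩
  have hB : ∀ k l, B (β k.succ) (β l.succ) = 7⁻¹ * CartanMatrix.A 6 k l := fun k l => by
    simpa using congrFun₂ gram_β_eq_smul_cartanA k l
  rw [hB, hB, show CartanMatrix.A 6 j j = 2 from congrFun (CartanMatrix.A_diag 6) j,
    CartanMatrix.A_apply_eq_ite_int i j]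
  split_ifs <;> norm_num
end
end

section
/- The vector f satisfies ⟨f|f⟩ = 2/7, its multiple 7f belongs to L, but f itself does not belong to L. -/
noncomputable section

/-!
The coordinate `x 0` is integral on each generator `vᵢ` (it is `0`, `-2` or `-1`), hence on all
of `L`; but `f 0 = 5/7`. On the other hand `7f = v1 + 3v2 + 2v3 - v4 + v5 - 3v6`.
-/

theorem Submodule.apply_mem_one_of_mem_span {ι : Type*} {s : Set (ι → ℚ)} (i : ι)
    (hs : ∀ v ∈ s, v i ∈ (1 : Submodule ℤ ℚ)) {x : ι → ℚ} (hx : x ∈ span ℤ s) :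
    x i ∈ (1 : Submodule ℤ ℚ) :=
  (span_le.mpr hs : span ℤ s ≤ (1 : Submodule ℤ ℚ).comap (LinearMap.proj i)) hx

theorem B_f_f : B f f = 2 / 7 := by
  norm_num [B, f, Fin.sum_univ_succ]

theorem smul_seven_f_eq :
    (7 : ℚ) • f = v1 + (3 : ℤ) • v2 + (2 : ℤ) • v3 - v4 + v5 - (3 : ℤ) • v6 := by
  funext i
  fin_cases i <;> norm_num [f, v1, v2, v3, v4, v5, v6]

theorem smul_seven_f_mem_L : (7 : ℚ) • f ∈ L := by
  have hv : ∀ v ∈ ({v1, v2, v3, v4, v5, v6} : Set (Fin 24 → ℚ)), v ∈ L :=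
    fun v hv => Submodule.subset_span hv
  rw [smul_seven_f_eq]
  refine L.sub_mem (L.add_mem (L.sub_mem (L.add_mem (L.add_mem ?_ (L.smul_mem _ ?_))
    (L.smul_mem _ ?_)) ?_) ?_) (L.smul_mem _ ?_) <;> exact hv _ (by simp)

theorem f_notMem_L : f ∉ L := by
  intro hf
  have hint : ∀ v ∈ ({v1, v2, v3, v4, v5, v6} : Set (Fin 24 → ℚ)),
      v 0 ∈ (1 : Submodule ℤ ℚ) := by
    simp only [Set.mem_insert_iff, Set.mem_singleton_iff, Submodule.mem_one]
    rintro v (rfl | rfl | rfl | rfl | rfl | rfl)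
    exacts [⟨0, by norm_num [v1]⟩, ⟨0, by norm_num [v2]⟩, ⟨0, by norm_num [v3]⟩,
      ⟨-2, by norm_num [v4]⟩, ⟨0, by norm_num [v5]⟩, ⟨-1, by norm_num [v6]⟩]
  obtain ⟨n, hn⟩ := Submodule.mem_one.mp (Submodule.apply_mem_one_of_mem_span 0 hint hf)
  have h7n : ((7 * n : ℤ) : ℚ) = 5 := by
    norm_num [f] at hn
    push_cast
    linarith
  have : 7 * n = 5 := by exact_mod_cast h7n
  omega

/-- `⟨f|f⟩ = 2/7`, `7f ∈ L`, but `f ∉ L`. -/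
theorem stmt9 :
    B f f = 2/7 ∧ (7 : ℚ) • f ∈ L ∧ f ∉ L :=
  ⟨B_f_f, smul_seven_f_mem_L, f_notMem_L⟩
end
end
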